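/- arXiv:1501.04219 — 2 statements merged into one kernel-verified Lean document; each statement's English description precedes it below -/
import Mathlib

section
/- Let $m$ be a natural number, $\Omega \subseteq \mathbb{C}$ a connected open set, $h \le m$, and let $A_0, A_1, \dots, A_h : \Omega \to \mathbb{C}^m$ be holomorphic maps all of whose values lie in the span of $e_{h+1}, \dots, e_m$ (i.e., the first $h$ coordinates of each $A_i(y)$ vanish). Define vector fields on $\Omega \times \mathbb{C}^m$ by $v_0(y,x) = (1, A_0(y))$ and $v_i(y,x) = (0, e_i + A_i(y))$ for $i = 1, \dots, h$. If for every $i = 1, \dots, h$ and every point $p \in \Omega \times \mathbb{C}^m$ the Lie bracket $[v_0, v_i](p)$ lies in the $\mathbb{C}$-linear span of $v_0(p), v_1(p), \dots, v_h(p)$, then each $A_i$ for $i = 1, \dots, h$ is constant on $\Omega$. -/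
/-! At `(y, 0)` the fields `v₀` and `vᵢ` depend only on the base point and `vᵢ` is vertical, so
`[v₀, vᵢ] = (0, Aᵢ'(y))`. In a relation `(0, Aᵢ'(y)) = a v₀ + ∑ cⱼ vⱼ` the base coordinate forces
`a = 0`, and the coordinate along `e_k`, `k ≤ h`, reads `c_k = Aᵢ'(y)_k = 0`, because `Aᵢ` (hence
`Aᵢ'`) takes values in the span of `e_{h+1}, …, e_m`. Thus `Aᵢ' = 0` on the connected open set
`Ω`. -/

/-- Lie bracket of vector fields on (an open subset of) a complex normed space,
viewed as maps into the model vector space: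
`[V,W](p) = DW_p(V(p)) - DV_p(W(p))`. -/
noncomputable def lieBracket {E : Type*} [NormedAddCommGroup E] [NormedSpace ℂ E]
    (V W : E → E) (p : E) : E :=
  fderiv ℂ W p (V p) - fderiv ℂ V p (W p)

section

variable {𝕜 E F G : Type*} [NontriviallyNormedField 𝕜] [NormedAddCommGroup E] [NormedSpace 𝕜 E]
  [NormedAddCommGroup F] [NormedSpace 𝕜 F] [NormedAddCommGroup G] [NormedSpace 𝕜 G]

theorem fderiv_comp_fst (g : E → G) (p : E × F) :
    fderiv 𝕜 (fun q : E × F => g q.1) p =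
      (fderiv 𝕜 g p.1).comp (ContinuousLinearMap.fst 𝕜 E F) := by
  by_cases hg : DifferentiableAt 𝕜 g p.1
  · exact (hg.hasFDerivAt.comp p hasFDerivAt_fst).fderiv
  · have hgf : ¬DifferentiableAt 𝕜 (fun q : E × F => g q.1) p := fun hd =>
      hg (DifferentiableAt.comp (g := fun q : E × F => g q.1) (f := fun y => (y, p.2)) p.1 hd
        (differentiableAt_id.prodMk (differentiableAt_const p.2)))
    rw [fderiv_zero_of_not_differentiableAt hg, fderiv_zero_of_not_differentiableAt hgf,
      ContinuousLinearMap.zero_comp]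

theorem deriv_apply_eq_zero_of_apply_eq_zero {ι : Type*} [Fintype ι] {f : 𝕜 → ι → F} {x : 𝕜}
    (hf : DifferentiableAt 𝕜 f x) {k : ι} (hk : ∀ y, f y k = 0) : deriv f x k = 0 := by
  rw [deriv_pi fun i => differentiableAt_pi.1 hf i]
  simp [hk]

end

theorem lieBracket_vertical {F : Type*} [NormedAddCommGroup F] [NormedSpace ℂ F] (a b : ℂ → F)
    (p : ℂ × F) (hb : DifferentiableAt ℂ b p.1) :
    lieBracket (fun q => (1, a q.1)) (fun q => (0, b q.1)) p = (0, deriv b p.1) := by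
  have hdb : deriv (fun y => ((0 : ℂ), b y)) p.1 = (0, deriv b p.1) :=
    ((hasDerivAt_const p.1 0).prodMk hb.hasDerivAt).deriv
  simp only [lieBracket, fderiv_comp_fst (fun y => ((1 : ℂ), a y)),
    fderiv_comp_fst (fun y => ((0 : ℂ), b y)), ContinuousLinearMap.comp_apply,
    ContinuousLinearMap.coe_fst', ContinuousLinearMap.map_zero, sub_zero]
  exact hdb

theorem Submodule.mem_span_range_of_mk_zero_mem_span_insert {R M : Type*} [Ring R] [AddCommGroup M]
    [Module R M] {ι : Type*} {u w : M} {f : ι → M}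
    (h : ((0 : R), w) ∈ span R (insert ((1 : R), u) (Set.range fun j => ((0 : R), f j)))) :
    w ∈ span R (Set.range f) := by
  obtain ⟨a, z, hz, hw⟩ := mem_span_insert.1 h
  have hz' : z ∈ (⊥ : Submodule R R).prod (span R (Set.range f)) := by
    refine span_le.2 ?_ hz
    rintro _ ⟨j, rfl⟩
    exact ⟨zero_mem _, subset_span ⟨j, rfl⟩⟩
  obtain ⟨hz1, hz2⟩ := hz'
  obtain ⟨hfst, rfl⟩ := Prod.ext_iff.1 hw
  have ha : a = 0 := by simpa [(mem_bot R).1 hz1] using hfst.symm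
  simpa [ha] using hz2

theorem eq_zero_of_mem_span_single_add {R : Type*} [CommSemiring R] {m h : ℕ} (hm : h ≤ m)
    {a : Fin h → Fin m → R} (ha : ∀ j (k : Fin m), (k : ℕ) < h → a j k = 0) {w : Fin m → R}
    (hw : ∀ k : Fin m, (k : ℕ) < h → w k = 0)
    (hspan : w ∈ Submodule.span R (Set.range fun j => Pi.single (Fin.castLE hm j) 1 + a j)) :
    w = 0 := by
  obtain ⟨c, rfl⟩ := Submodule.mem_span_range_iff_exists_fun R |>.1 hspan
  have hc : ∀ j₀, c j₀ = 0 := by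
    intro j₀
    have hlt : ((Fin.castLE hm j₀ : Fin m) : ℕ) < h := j₀.isLt
    simpa [Finset.sum_apply, ha _ _ hlt, Pi.single_apply, Fin.castLE_inj] using hw _ hlt
  simp [hc]

theorem stmt2_general (m h : ℕ) (hm : h ≤ m) (Ω : Set ℂ) (hΩ : IsOpen Ω)
    (hconn : IsConnected Ω)
    (A₀ : ℂ → (Fin m → ℂ)) (A : Fin h → ℂ → (Fin m → ℂ))
    (hA : ∀ i, DifferentiableOn ℂ (A i) Ω)
    (hAspan : ∀ i y, ∀ j : Fin m, (j : ℕ) < h → A i y j = 0)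
    (v₀ : (ℂ × (Fin m → ℂ)) → (ℂ × (Fin m → ℂ)))
    (v : Fin h → (ℂ × (Fin m → ℂ)) → (ℂ × (Fin m → ℂ)))
    (hv₀ : ∀ p, v₀ p = (1, A₀ p.1))
    (hv : ∀ i p, v i p = (0, Pi.single (Fin.castLE hm i) 1 + A i p.1))
    (hbracket : ∀ (i : Fin h) (p : ℂ × (Fin m → ℂ)), p.1 ∈ Ω →
      lieBracket v₀ (v i) p ∈
        Submodule.span ℂ (insert (v₀ p) (Set.range fun j : Fin h => v j p))) :
    ∀ (i : Fin h), ∀ y₁ ∈ Ω, ∀ y₂ ∈ Ω, A i y₁ = A i y₂ := by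
  intro i y₁ hy₁ y₂ hy₂
  refine hΩ.is_const_of_deriv_eq_zero hconn.isPreconnected (hA i) (fun y hy => ?_) hy₁ hy₂
  have hAy : DifferentiableAt ℂ (A i) y := (hA i y hy).differentiableAt (hΩ.mem_nhds hy)
  have hbr : ((0 : ℂ), deriv (A i) y) ∈ Submodule.span ℂ (insert ((1 : ℂ), A₀ y)
      (Set.range fun j => ((0 : ℂ), Pi.single (Fin.castLE hm j) 1 + A j y))) := by
    -- `convert`, not `rw`: the two `NormedSpace ℂ (ℂ × (Fin m → ℂ))` instances agree only up to
    -- unfolding.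
    convert hbracket i (y, 0) hy using 1
    · simp only [hv₀, hv]
    · rw [funext hv₀, funext (hv i), ← deriv_const_add (Pi.single (Fin.castLE hm i) 1)]
      exact (lieBracket_vertical A₀ _ (y, 0) (hAy.const_add _)).symm
  exact eq_zero_of_mem_span_single_add hm (hAspan · y)
    (fun k hk => deriv_apply_eq_zero_of_apply_eq_zero hAy (hAspan i · k hk))
    (Submodule.mem_span_range_of_mk_zero_mem_span_insert hbr)

/-- with `v₀(y,x) = (1, A₀(y))` and `vᵢ(y,x) = (0, eᵢ + Aᵢ(y))` on
`Ω × ℂ^m`, `Ω ⊆ ℂ` connected open, where all the holomorphic maps `A₀, …, A_h` take values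
in the span of `e_{h+1}, …, e_m`: if every bracket `[v₀, vᵢ](p)` lies in the span of
`v₀(p), v₁(p), …, v_h(p)`, then each `Aᵢ`, `i = 1, …, h`, is constant on `Ω`. -/
theorem stmt2 (m h : ℕ) (hm : h ≤ m) (Ω : Set ℂ) (hΩ : IsOpen Ω)
    (hconn : IsConnected Ω)
    (A₀ : ℂ → (Fin m → ℂ)) (A : Fin h → ℂ → (Fin m → ℂ))
    (hA₀ : DifferentiableOn ℂ A₀ Ω) (hA : ∀ i, DifferentiableOn ℂ (A i) Ω)
    (hA₀span : ∀ y, ∀ j : Fin m, (j : ℕ) < h → A₀ y j = 0)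
    (hAspan : ∀ i y, ∀ j : Fin m, (j : ℕ) < h → A i y j = 0)
    (v₀ : (ℂ × (Fin m → ℂ)) → (ℂ × (Fin m → ℂ)))
    (v : Fin h → (ℂ × (Fin m → ℂ)) → (ℂ × (Fin m → ℂ)))
    (hv₀ : ∀ p, v₀ p = (1, A₀ p.1))
    (hv : ∀ i p, v i p = (0, Pi.single (Fin.castLE hm i) 1 + A i p.1))
    (hbracket : ∀ (i : Fin h) (p : ℂ × (Fin m → ℂ)), p.1 ∈ Ω →
      lieBracket v₀ (v i) p ∈
        Submodule.span ℂ (insert (v₀ p) (Set.range fun j : Fin h => v j p))) :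
    ∀ (i : Fin h), ∀ y₁ ∈ Ω, ∀ y₂ ∈ Ω, A i y₁ = A i y₂ :=
  stmt2_general m h hm Ω hΩ hconn A₀ A hA hAspan v₀ v hv₀ hv hbracket
end

section
/- Let $d, l$ be natural numbers, $\Omega \subseteq \mathbb{C}^d$ open, and let $s : \Omega \to \mathrm{Hom}_{\mathbb{C}}(\mathbb{C}^d, \mathbb{C}^l)$ be a holomorphic map into the space of linear maps. For a holomorphic map $u : \Omega \to \mathbb{C}^d$ define the vector field $V_u$ on $\Omega \times \mathbb{C}^l$ by $V_u(x,y) = (u(x), s(x)(u(x)))$. Then for any two holomorphic maps $u_1, u_2 : \Omega \to \mathbb{C}^d$ and every $(x,y) \in \Omega \times \mathbb{C}^l$, $[V_{u_1}, V_{u_2}](x,y) = \big(w,\; s(x)(w) + (Ds_x(u_1(x)))(u_2(x)) - (Ds_x(u_2(x)))(u_1(x))\big)$, where $w = [u_1, u_2](x) = D(u_2)_x(u_1(x)) - D(u_1)_x(u_2(x))$. -/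
section

variable {𝕜 : Type*} [NontriviallyNormedField 𝕜]
  {E F : Type*} [NormedAddCommGroup E] [NormedSpace 𝕜 E] [NormedAddCommGroup F] [NormedSpace 𝕜 F]

def liftField (s : E → E →L[𝕜] F) (u : E → E) (q : E × F) : E × F :=
  (u q.1, s q.1 (u q.1))

theorem fderiv_liftField_apply {s : E → E →L[𝕜] F} {u : E → E} {p : E × F}
    (hs : DifferentiableAt 𝕜 s p.1) (hu : DifferentiableAt 𝕜 u p.1) (v : E × F) :
    fderiv 𝕜 (liftField s u) p v =
      (fderiv 𝕜 u p.1 v.1, fderiv 𝕜 s p.1 v.1 (u p.1) + s p.1 (fderiv 𝕜 u p.1 v.1)) := by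
  have h : HasFDerivAt (liftField s u) _ p :=
    (hu.hasFDerivAt.prodMk (hs.hasFDerivAt.clm_apply hu.hasFDerivAt)).comp p hasFDerivAt_fst
  rw [h.fderiv]
  simp [add_comm]

end

theorem lieBracket_liftField {E F : Type*} [NormedAddCommGroup E] [NormedSpace ℂ E]
    [NormedAddCommGroup F] [NormedSpace ℂ F] {s : E → E →L[ℂ] F} {u₁ u₂ : E → E} {p : E × F}
    (hs : DifferentiableAt ℂ s p.1) (hu₁ : DifferentiableAt ℂ u₁ p.1)
    (hu₂ : DifferentiableAt ℂ u₂ p.1) :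
    lieBracket (liftField s u₁) (liftField s u₂) p =
      (lieBracket u₁ u₂ p.1, s p.1 (lieBracket u₁ u₂ p.1)
        + fderiv ℂ s p.1 (u₁ p.1) (u₂ p.1) - fderiv ℂ s p.1 (u₂ p.1) (u₁ p.1)) := by
  simp only [lieBracket, fderiv_liftField_apply hs hu₁, fderiv_liftField_apply hs hu₂,
    liftField, Prod.mk_sub_mk, map_sub]
  congr 1
  abel

/-- for a holomorphic map `s : Ω → Hom(ℂ^d, ℂ^l)` and holomorphic
`u₁, u₂ : Ω → ℂ^d`, the vector fields `V_u(x,y) = (u(x), s(x)(u(x)))` on `Ω × ℂ^l`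
satisfy `[V_{u₁}, V_{u₂}](x,y) = (w, s(x)(w) + (Ds_x(u₁(x)))(u₂(x)) - (Ds_x(u₂(x)))(u₁(x)))`
where `w = [u₁, u₂](x) = D(u₂)_x(u₁(x)) - D(u₁)_x(u₂(x))`. -/
theorem stmt3 (d l : ℕ) (Ω : Set (Fin d → ℂ)) (hΩ : IsOpen Ω)
    (s : (Fin d → ℂ) → ((Fin d → ℂ) →L[ℂ] (Fin l → ℂ)))
    (hs : DifferentiableOn ℂ s Ω)
    (u₁ u₂ : (Fin d → ℂ) → (Fin d → ℂ))
    (hu₁ : DifferentiableOn ℂ u₁ Ω) (hu₂ : DifferentiableOn ℂ u₂ Ω)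
    (V : ((Fin d → ℂ) → (Fin d → ℂ)) →
      ((Fin d → ℂ) × (Fin l → ℂ)) → ((Fin d → ℂ) × (Fin l → ℂ)))
    (hV : ∀ u p, V u p = (u p.1, s p.1 (u p.1))) :
    ∀ p : (Fin d → ℂ) × (Fin l → ℂ), p.1 ∈ Ω →
      lieBracket (V u₁) (V u₂) p =
        (fderiv ℂ u₂ p.1 (u₁ p.1) - fderiv ℂ u₁ p.1 (u₂ p.1),
          s p.1 (fderiv ℂ u₂ p.1 (u₁ p.1) - fderiv ℂ u₁ p.1 (u₂ p.1))
            + (fderiv ℂ s p.1 (u₁ p.1)) (u₂ p.1)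
            - (fderiv ℂ s p.1 (u₂ p.1)) (u₁ p.1)) := by
  intro p hp
  have hx := hΩ.mem_nhds hp
  have hV₁ : V u₁ = liftField s u₁ := funext (hV u₁)
  have hV₂ : V u₂ = liftField s u₂ := funext (hV u₂)
  rw [hV₁, hV₂, lieBracket_liftField (hs.differentiableAt hx) (hu₁.differentiableAt hx)
    (hu₂.differentiableAt hx)]
  rfl
end
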